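/- arXiv:1507.01831 — 3 statements merged into one kernel-verified Lean document; each statement's English description precedes it below -/
import Mathlib

section
/- If π and σ are permutations of ℕ with finite support whose supports overlap in exactly one point i (i.e. supp(π) ∩ supp(σ) = {i}), then the commutator σ⁻¹π⁻¹σπ is a 3-cycle, namely the cycle (i, σ⁻¹(i), π⁻¹(i)). -/
/-!
A point other than `i` is moved by at most one of `π`, `σ`, and a permutation maps the points
it moves to points it moves. So if `x`, `π x` and `σ x` all differ from `i`, then `π` and `σ`
commute at `x`, which is exactly the statement that the commutator fixes `x`. The three remaining
points `i`, `σ⁻¹ i`, `π⁻¹ i` are computed from the same observation: `π` fixes `σ i` and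
`σ⁻¹ i`, and `σ` fixes `π i` and `π⁻¹ i`.
-/

namespace Equiv.Perm

variable {α : Type*} {π σ : Perm α} {i x y : α}

theorem inv_apply_ne_self_of_apply_ne_self (h : σ i ≠ i) : σ⁻¹ i ≠ i :=
  fun h' => h (inv_eq_iff_eq.mp h').symm

theorem commutator_apply_eq_iff : (σ⁻¹ * π⁻¹ * σ * π) x = y ↔ σ (π x) = π (σ y) := by
  simp only [mul_apply, inv_eq_iff_eq]

section SupportsMeetInOnePoint

variable (h : {x | π x ≠ x} ∩ {x | σ x ≠ x} ⊆ {i})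
include h

theorem apply_eq_self_of_ne_of_moved (hx : x ≠ i) (hσx : σ x ≠ x) : π x = x :=
  by_contra fun hπx => hx (h ⟨hπx, hσx⟩)

theorem apply_eq_self_of_moved_apply_self (hσi : σ i ≠ i) : π (σ i) = σ i :=
  apply_eq_self_of_ne_of_moved h hσi (σ.injective.ne hσi)

theorem apply_eq_self_of_moved_inv_apply_self (hσi : σ i ≠ i) : π (σ⁻¹ i) = σ⁻¹ i := by
  have hσ'i := inv_apply_ne_self_of_apply_ne_self hσi
  exact apply_eq_self_of_ne_of_moved h hσ'i (by simpa using hσ'i.symm)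

theorem inv_apply_ne_inv_apply (hσi : σ i ≠ i) (hπi : π i ≠ i) : σ⁻¹ i ≠ π⁻¹ i := by
  intro heq
  have hfix := apply_eq_self_of_moved_inv_apply_self h hσi
  rw [heq] at hfix
  exact inv_apply_ne_self_of_apply_ne_self hπi (by simpa using hfix.symm)

theorem apply_comm_apply_of_moved (hx : x ≠ i) (hσx : σ x ≠ i) (hmoved : σ x ≠ x) :
    σ (π x) = π (σ x) := by
  rw [apply_eq_self_of_ne_of_moved h hx hmoved,
    apply_eq_self_of_ne_of_moved h hσx (σ.injective.ne hmoved)]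

end SupportsMeetInOnePoint

theorem apply_comm_apply_of_ne (h : {x | π x ≠ x} ∩ {x | σ x ≠ x} ⊆ {i})
    (hx : x ≠ i) (hσx : σ x ≠ i) (hπx : π x ≠ i) : σ (π x) = π (σ x) := by
  by_cases hσ : σ x = x
  · by_cases hπ : π x = x
    · rw [hσ, hπ, hσ]
    · exact (apply_comm_apply_of_moved (Set.inter_comm _ _ ▸ h) hx hπx hπ).symm
  · exact apply_comm_apply_of_moved h hx hσx hσ

end Equiv.Perm

open Equiv.Perm in
theorem commutator_of_singleton_support_overlap_isThreeCycle_general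
    (π σ : Equiv.Perm ℕ) (i : ℕ)
    (hover : {x | π x ≠ x} ∩ {x | σ x ≠ x} = {i}) :
    (i ≠ σ⁻¹ i ∧ σ⁻¹ i ≠ π⁻¹ i ∧ π⁻¹ i ≠ i) ∧
    (σ⁻¹ * π⁻¹ * σ * π) i = σ⁻¹ i ∧
    (σ⁻¹ * π⁻¹ * σ * π) (σ⁻¹ i) = π⁻¹ i ∧
    (σ⁻¹ * π⁻¹ * σ * π) (π⁻¹ i) = i ∧
    ∀ x : ℕ, x ≠ i → x ≠ σ⁻¹ i → x ≠ π⁻¹ i →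
      (σ⁻¹ * π⁻¹ * σ * π) x = x := by
  have h := hover.subset
  have h' : {x | σ x ≠ x} ∩ {x | π x ≠ x} ⊆ {i} := Set.inter_comm _ _ ▸ h
  obtain ⟨hπi, hσi⟩ : π i ≠ i ∧ σ i ≠ i := hover.symm.subset rfl
  refine ⟨⟨(inv_apply_ne_self_of_apply_ne_self hσi).symm, inv_apply_ne_inv_apply h hσi hπi,
    inv_apply_ne_self_of_apply_ne_self hπi⟩, ?_, ?_, ?_, ?_⟩
  · rw [commutator_apply_eq_iff]
    simp [apply_eq_self_of_moved_apply_self h' hπi]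
  · rw [commutator_apply_eq_iff, apply_eq_self_of_moved_inv_apply_self h hσi,
      apply_eq_self_of_moved_inv_apply_self h' hπi]
    simp
  · rw [commutator_apply_eq_iff]
    simp [apply_eq_self_of_moved_apply_self h hσi]
  · intro x hxi hxσ hxπ
    rw [commutator_apply_eq_iff]
    exact apply_comm_apply_of_ne h hxi (mt eq_inv_iff_eq.mpr hxσ) (mt eq_inv_iff_eq.mpr hxπ)

/-- If π and σ are finitely supported permutations of ℕ whose supports overlap in
exactly one point i, then the commutator σ⁻¹π⁻¹σπ is the 3-cycle (i, σ⁻¹(i), π⁻¹(i)). -/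
theorem commutator_of_singleton_support_overlap_isThreeCycle
    (π σ : Equiv.Perm ℕ) (i : ℕ)
    (hπ : {x | π x ≠ x}.Finite) (hσ : {x | σ x ≠ x}.Finite)
    (hover : {x | π x ≠ x} ∩ {x | σ x ≠ x} = {i}) :
    (i ≠ σ⁻¹ i ∧ σ⁻¹ i ≠ π⁻¹ i ∧ π⁻¹ i ≠ i) ∧
    (σ⁻¹ * π⁻¹ * σ * π) i = σ⁻¹ i ∧
    (σ⁻¹ * π⁻¹ * σ * π) (σ⁻¹ i) = π⁻¹ i ∧
    (σ⁻¹ * π⁻¹ * σ * π) (π⁻¹ i) = i ∧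
    ∀ x : ℕ, x ≠ i → x ≠ σ⁻¹ i → x ≠ π⁻¹ i →
      (σ⁻¹ * π⁻¹ * σ * π) x = x :=
  commutator_of_singleton_support_overlap_isThreeCycle_general π σ i hover
end

section
/- If G is a subgroup of S_∞ containing the group S_∞* of parity-preserving permutations together with at least one permutation σ that is not parity-preserving, then G = S_∞. -/
/-- The group `S_∞` of finitely supported permutations of the positive integers. -/
def Sinf : Subgroup (Equiv.Perm ℕ+) where
  carrier := {σ | {x | σ x ≠ x}.Finite}
  one_mem' := by
    simp only [Set.mem_setOf_eq, Equiv.Perm.one_apply, ne_eq, not_true_eq_false,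
      Set.setOf_false]
    exact Set.finite_empty
  mul_mem' := by
    intro a b ha hb
    refine Set.Finite.subset (ha.union hb) ?_
    intro x hx
    by_contra h
    simp only [Set.mem_union, Set.mem_setOf_eq, not_or, not_not] at h
    exact hx (by simp [Equiv.Perm.mul_apply, h.2, h.1])
  inv_mem' := by
    intro a ha
    refine Set.Finite.subset ha ?_
    intro x hx
    simp only [Set.mem_setOf_eq] at hx ⊢
    intro h
    exact hx (a.injective (by simp [h]))

/-- The set `S_∞*` of finitely supported parity-preserving permutations of ℕ₊. -/
def SinfStarSet : Set (Equiv.Perm ℕ+) :=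
  {σ | {x | σ x ≠ x}.Finite ∧ ∀ i : ℕ+, Even (i : ℕ) → Even (σ i : ℕ)}

/-!
Take `i` even with `σ i` odd, and an odd `j` fixed by `σ` (there is one, as `σ` moves only
finitely many points). Conjugating the parity-preserving transposition `(σ i, j)` by `σ` puts the
mixed-parity transposition `(i, j)` into `G`, and conjugating that by the parity-preserving
`(i, a)(j, b)` gives every transposition `(a, b)` with `a` even and `b` odd. So `G` contains all
transpositions, and these generate `S_∞`.
-/

open Equiv MulAction

section SwapMem

variable {α : Type*} [DecidableEq α] {G : Subgroup (Perm α)}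

theorem swap_apply_apply_mem {f : Perm α} {x y : α} (hf : f ∈ G) (hxy : swap x y ∈ G) :
    swap (f x) (f y) ∈ G := by
  rw [swap_apply_apply]
  exact G.mul_mem (G.mul_mem hf hxy) (G.inv_mem hf)

variable {p : α → Prop} (hsame : ∀ a b, (p a ↔ p b) → swap a b ∈ G)
include hsame

theorem exists_swap_mem_of_not_apply {σ : Perm α} (hσ : σ ∈ G) (hfin : (fixedBy α σ)ᶜ.Finite)
    (hinf : {x | ¬ p x}.Infinite) {i : α} (hσi : ¬ p (σ i)) :
    ∃ j, ¬ p j ∧ swap i j ∈ G := by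
  obtain ⟨j, hj, hσj⟩ := (hinf.sdiff hfin).nonempty
  rw [Set.notMem_compl_iff, mem_fixedBy, Perm.smul_def] at hσj
  refine ⟨j, hj, ?_⟩
  have hconj := swap_apply_apply_mem (G.inv_mem hσ) (hsame (σ i) j (iff_of_false hσi hj))
  rwa [Perm.inv_eq_iff_eq.mpr rfl, Perm.inv_eq_iff_eq.mpr hσj.symm] at hconj

theorem swap_mem_of_swap_mem {i j : α} (hi : p i) (hj : ¬ p j) (hij : swap i j ∈ G) (a b : α) :
    swap a b ∈ G := by
  have hne : ∀ {x y}, p x → ¬ p y → x ≠ y := fun hx hy h ↦ hy (h ▸ hx)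
  have hmixed : ∀ a b, p a → ¬ p b → swap a b ∈ G := by
    intro a b ha hb
    have hπ : swap i a * swap j b ∈ G :=
      G.mul_mem (hsame i a (iff_of_true hi ha)) (hsame j b (iff_of_false hj hb))
    have hπi : (swap i a * swap j b) i = a := by
      rw [Perm.mul_apply, swap_apply_of_ne_of_ne (hne hi hj) (hne hi hb),
        swap_apply_left]
    have hπj : (swap i a * swap j b) j = b := by
      rw [Perm.mul_apply, swap_apply_left,
        swap_apply_of_ne_of_ne (hne hi hb).symm (hne ha hb).symm]
    simpa only [hπi, hπj] using swap_apply_apply_mem hπ hij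
  by_cases hab : p a ↔ p b
  · exact hsame a b hab
  by_cases ha : p a
  · exact hmixed a b ha (fun hb ↦ hab (iff_of_true ha hb))
  · rw [swap_comm]
    exact hmixed b a ((not_iff.mp hab).mp ha) ha

end SwapMem

theorem mem_sinf_iff {σ : Perm ℕ+} : σ ∈ Sinf ↔ (fixedBy ℕ+ σ)ᶜ.Finite := Iff.rfl

theorem sinf_eq_closure_isSwap : Sinf = Subgroup.closure {σ | σ.IsSwap} :=
  Subgroup.ext fun _ ↦ mem_sinf_iff.trans mem_closure_isSwap'.symm

theorem swap_mem_sinfStarSet {a b : ℕ+} (h : Even (a : ℕ) ↔ Even (b : ℕ)) :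
    swap a b ∈ SinfStarSet := by
  refine ⟨finite_compl_fixedBy_swap, fun i hi ↦ ?_⟩
  rw [swap_apply_def]
  split_ifs with hia hib
  · exact h.mp (hia ▸ hi)
  · exact h.mpr (hib ▸ hi)
  · exact hi

theorem infinite_setOf_not_even : {x : ℕ+ | ¬ Even (x : ℕ)}.Infinite :=
  Set.infinite_of_forall_exists_gt fun a ↦
    ⟨⟨2 * a + 1, by omega⟩, Nat.not_even_iff_odd.mpr (odd_two_mul_add_one _), by
      change (a : ℕ) < 2 * a + 1; omega⟩

/-- If a subgroup G of S_∞ contains S_∞* together with a permutation that is not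
parity-preserving, then G = S_∞. -/
theorem eq_sinf_of_sinfStar_le_and_not_parityPres (G : Subgroup (Equiv.Perm ℕ+))
    (hGle : (G : Set (Equiv.Perm ℕ+)) ⊆ ↑Sinf)
    (hstar : SinfStarSet ⊆ ↑G)
    (σ : Equiv.Perm ℕ+) (hσG : σ ∈ G)
    (hσ : ¬ ∀ i : ℕ+, Even (i : ℕ) → Even (σ i : ℕ)) :
    (G : Set (Equiv.Perm ℕ+)) = ↑Sinf := by
  obtain ⟨i, hi, hσi⟩ := not_forall₂.mp hσ
  have hsame : ∀ a b : ℕ+, (Even (a : ℕ) ↔ Even (b : ℕ)) → swap a b ∈ G :=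
    fun a b h ↦ hstar (swap_mem_sinfStarSet h)
  obtain ⟨j, hj, hij⟩ := exists_swap_mem_of_not_apply (p := fun x : ℕ+ ↦ Even (x : ℕ)) hsame
    hσG (mem_sinf_iff.mp (hGle hσG)) infinite_setOf_not_even hσi
  refine hGle.antisymm ?_
  rw [sinf_eq_closure_isSwap]
  refine (Subgroup.closure_le G).mpr ?_
  rintro _ ⟨a, b, -, rfl⟩
  exact swap_mem_of_swap_mem hsame hi hj hij a b
end

section
/- There is no proper intermediate subgroup between S_∞* and S_∞: if G is a subgroup with S_∞* ⊆ G ⊆ S_∞, then G = S_∞* or G = S_∞. -/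
lemma swap_support_finite (u v : ℕ+) : {x | Equiv.swap u v x ≠ x}.Finite := by
  apply ((Set.finite_singleton v).insert u).subset
  intro x hx
  by_contra h
  simp only [Set.mem_insert_iff, Set.mem_singleton_iff, not_or] at h
  exact hx (Equiv.swap_apply_of_ne_of_ne h.1 h.2)

lemma swap_mem_star {u v : ℕ+} (h : Even (u : ℕ) ↔ Even (v : ℕ)) :
    Equiv.swap u v ∈ SinfStarSet := by
  refine ⟨swap_support_finite u v, fun i hi => ?_⟩
  rcases eq_or_ne i u with rfl | hu
  · rw [Equiv.swap_apply_left]; exact h.mp hi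
  rcases eq_or_ne i v with rfl | hv
  · rw [Equiv.swap_apply_right]; exact h.mpr hi
  · rw [Equiv.swap_apply_of_ne_of_ne hu hv]; exact hi

lemma evens_infinite : {x : ℕ+ | Even (x : ℕ)}.Infinite := by
  apply Set.infinite_of_injective_forall_mem (f := fun n : ℕ => (⟨2 * (n + 1), by positivity⟩ : ℕ+))
  · intro a b hab
    simp only [Subtype.mk.injEq] at hab
    omega
  · intro n
    exact ⟨n + 1, by show 2 * (n + 1) = (n + 1) + (n + 1); ring⟩

lemma perm_mem_of_swaps (G : Subgroup (Equiv.Perm ℕ+))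
    (hswap : ∀ x y : ℕ+, Equiv.swap x y ∈ G) :
    ∀ (n : ℕ) (s : Finset ℕ+), s.card = n → ∀ σ : Equiv.Perm ℕ+,
      {x | σ x ≠ x} ⊆ ↑s → σ ∈ G := by
  intro n
  induction n using Nat.strong_induction_on with
  | _ n ih =>
    intro s hcard σ hsupp
    by_cases hσ : ∀ x, σ x = x
    · have : σ = 1 := Equiv.ext hσ
      rw [this]; exact one_mem G
    · push_neg at hσ
      obtain ⟨x, hx⟩ := hσ
      have hxs : x ∈ s := hsupp hx
      set σ' : Equiv.Perm ℕ+ := Equiv.swap x (σ x) * σ with hσ'def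
      have hsupp' : {y | σ' y ≠ y} ⊆ ↑(s.erase x) := by
        intro y hy
        simp only [Set.mem_setOf_eq, hσ'def, Equiv.Perm.mul_apply] at hy
        have hyx : y ≠ x := by
          rintro rfl
          exact hy (Equiv.swap_apply_right _ _)
        have hyσ : σ y ≠ y := by
          intro hfix
          apply hy
          rw [hfix]
          apply Equiv.swap_apply_of_ne_of_ne hyx
          intro hyy
          exact hyx (σ.injective (hfix.trans hyy))
        simp only [Finset.coe_erase, Set.mem_diff, Set.mem_singleton_iff]
        exact ⟨hsupp hyσ, hyx⟩
      have hcard' : (s.erase x).card < n := by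
        rw [← hcard]
        exact Finset.card_erase_lt_of_mem hxs
      have hσ'G : σ' ∈ G := ih _ hcard' _ rfl _ hsupp'
      have : σ = Equiv.swap x (σ x) * σ' := by
        rw [hσ'def, ← mul_assoc, Equiv.swap_mul_self, one_mul]
      rw [this]
      exact mul_mem (hswap x (σ x)) hσ'G

/-- There is no proper intermediate subgroup between S_∞* and S_∞. -/
theorem sinfStar_maximal (G : Subgroup (Equiv.Perm ℕ+))
    (h₁ : SinfStarSet ⊆ ↑G) (h₂ : (G : Set (Equiv.Perm ℕ+)) ⊆ ↑Sinf) :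
    (G : Set (Equiv.Perm ℕ+)) = SinfStarSet ∨ (G : Set (Equiv.Perm ℕ+)) = ↑Sinf := by
  by_cases hG : (G : Set (Equiv.Perm ℕ+)) ⊆ SinfStarSet
  · exact Or.inl (subset_antisymm hG h₁)
  right
  refine subset_antisymm h₂ ?_
  -- there is σ ∈ G not parity-preserving
  rw [Set.not_subset] at hG
  obtain ⟨σ, hσG, hσns⟩ := hG
  have hσfin : {x | σ x ≠ x}.Finite := h₂ hσG
  have : ∃ i : ℕ+, Even (i : ℕ) ∧ ¬ Even ((σ i : ℕ)) := by
    by_contra h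
    push_neg at h
    exact hσns ⟨hσfin, h⟩
  obtain ⟨i, hie, hio⟩ := this
  -- pick an even fixed point y
  obtain ⟨y, hyev, hyfix⟩ : ∃ y : ℕ+, Even (y : ℕ) ∧ σ y = y := by
    obtain ⟨y, hy⟩ := (evens_infinite.diff hσfin).nonempty
    simp only [Set.mem_diff, Set.mem_setOf_eq, not_not] at hy
    exact ⟨y, hy.1, hy.2⟩
  -- mixed transposition in G
  have hτ₀ : Equiv.swap (σ i) y ∈ G := by
    have h1 : Equiv.swap i y ∈ G := h₁ (swap_mem_star (by simp [hie, hyev]))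
    have := mul_mem (mul_mem hσG h1) (inv_mem hσG)
    rwa [← Equiv.swap_apply_apply, hyfix] at this
  have hσio : ¬ Even ((Equiv.swap (σ i) y : Equiv.Perm ℕ+) y : ℕ) := by
    rwa [Equiv.swap_apply_right]
  -- every mixed swap is in G
  have hmixed : ∀ u v : ℕ+, Even (u : ℕ) → ¬ Even (v : ℕ) → Equiv.swap u v ∈ G := by
    intro u v huev hvod
    set ρ : Equiv.Perm ℕ+ := Equiv.swap y u * Equiv.swap (σ i) v with hρ
    have hρG : ρ ∈ G := mul_mem (h₁ (swap_mem_star (by simp [hyev, huev])))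
      (h₁ (swap_mem_star (by simp [hio, hvod])))
    have hyσi : y ≠ σ i := fun h => hio (by rw [← h]; exact hyev)
    have hyv : y ≠ v := fun h => hvod (by rw [← h]; exact hyev)
    have hρy : ρ y = u := by
      rw [hρ, Equiv.Perm.mul_apply, Equiv.swap_apply_of_ne_of_ne hyσi hyv,
        Equiv.swap_apply_left]
    have hvy : v ≠ y := fun h => hvod (by rw [h]; exact hyev)
    have hvu : v ≠ u := fun h => hvod (by rw [h]; exact huev)
    have hρσi : ρ (σ i) = v := by
      rw [hρ, Equiv.Perm.mul_apply, Equiv.swap_apply_left,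
        Equiv.swap_apply_of_ne_of_ne hvy hvu]
    have := mul_mem (mul_mem hρG hτ₀) (inv_mem hρG)
    rwa [← Equiv.swap_apply_apply, hρσi, hρy, Equiv.swap_comm] at this
  -- hence all swaps are in G
  have hswap : ∀ x y : ℕ+, Equiv.swap x y ∈ G := by
    intro u v
    by_cases hu : Even (u : ℕ) <;> by_cases hv : Even (v : ℕ)
    · exact h₁ (swap_mem_star (by simp [hu, hv]))
    · exact hmixed u v hu hv
    · rw [Equiv.swap_comm]; exact hmixed v u hv hu
    · exact h₁ (swap_mem_star (by simp [hu, hv]))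
  -- finally every finitely supported perm is in G
  intro τ hτ
  have hτfin : {x | τ x ≠ x}.Finite := hτ
  exact perm_mem_of_swaps G hswap hτfin.toFinset.card hτfin.toFinset rfl τ
    (by simp [Set.Finite.coe_toFinset])
end
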